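/- The vertices of a convex polygon with an odd number 2n+1 of vertices (no three collinear, all vertices extreme) form a monochromatic configuration: all points are equivalent under the Orchard relation. -/

import Mathlib

open scoped Classical

noncomputable section

/-- Orientation determinant of two vectors in the plane. -/
def det2 (u v : ℝ × ℝ) : ℝ := u.1 * v.2 - u.2 * v.1

/-- The line through `A` and `B` separates the points `P` and `Q`
(they lie in distinct open half-planes determined by the line). -/
def SepLine (A B P Q : ℝ × ℝ) : Prop :=
  det2 (B - A) (P - A) * det2 (B - A) (Q - A) < 0

/-- A finite planar point set is a generic configuration if no three of its
points are collinear. -/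
def Generic (C : Finset (ℝ × ℝ)) : Prop :=
  ∀ a ∈ C, ∀ b ∈ C, ∀ c ∈ C, a ≠ b → a ≠ c → b ≠ c →
    ¬ Collinear ℝ ({a, b, c} : Set (ℝ × ℝ))

/-- `nsep C P Q` is the number of lines spanned by (unordered) pairs of points of
`C \ {P,Q}` that separate `P` from `Q`. -/
def nsep (C : Finset (ℝ × ℝ)) (P Q : ℝ × ℝ) : ℕ :=
  (((C \ {P, Q}).powersetCard 2).filter
    (fun s => ∃ A ∈ s, ∃ B ∈ s, A ≠ B ∧ SepLine A B P Q)).card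

/-- The Orchard relation: `P ∼ Q` iff `n(P,Q) ≡ n - 3 (mod 2)` where `n = |C|`. -/
def Orchard (C : Finset (ℝ × ℝ)) (P Q : ℝ × ℝ) : Prop :=
  (nsep C P Q : ℤ) ≡ (C.card : ℤ) - 3 [ZMOD 2]

/-- A configuration is monochromatic if all its points are Orchard-equivalent. -/
def Mono (C : Finset (ℝ × ℝ)) : Prop :=
  ∀ P ∈ C, ∀ Q ∈ C, P ≠ Q → Orchard C P Q

/-- A configuration is in convex position if each of its points is a vertex of
the convex hull. -/
def ConvexPos (C : Finset (ℝ × ℝ)) : Prop :=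
  ∀ P ∈ C, P ∉ convexHull ℝ ((C : Set (ℝ × ℝ)) \ {P})

/-! For distinct `P, Q ∈ C`, any two further points `A, B` give four points in convex position.
Their affine dependence `∑ wᵢ xᵢ = 0, ∑ wᵢ = 0` then has two positive and two negative
coefficients (a lone sign would put that point in the triangle of the others), and the line `AB`
separates `P` from `Q` exactly when `w_P, w_Q` share a sign, i.e. exactly when `w_A, w_B` do,
i.e. exactly when the line `PQ` separates `A` from `B`. Hence `n(P, Q) = k * l`, where `k` and `l`
count the points of `C \ {P, Q}` on either side of `PQ`. By genericity no point lies on `PQ`, so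
`k + l = 2n - 1` is odd, `k * l` is even, and so is `|C| - 3 = 2n - 2`. -/

open Finset

theorem mem_convexHull_of_affine_relation {E : Type*} [AddCommGroup E] [Module ℝ E]
    {x₁ x₂ x₃ x₄ : E} {w₁ w₂ w₃ w₄ : ℝ}
    (hrel : w₁ • x₁ + w₂ • x₂ + w₃ • x₃ + w₄ • x₄ = 0) (hsum : w₁ + w₂ + w₃ + w₄ = 0)
    (h₁ : w₁ ≠ 0) (h₂ : w₁ * w₂ ≤ 0) (h₃ : w₁ * w₃ ≤ 0) (h₄ : w₁ * w₄ ≤ 0) :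
    x₁ ∈ convexHull ℝ {x₂, x₃, x₄} := by
  have weight_nonneg {w : ℝ} (h : w₁ * w ≤ 0) : 0 ≤ -w / w₁ := by
    rw [show -w / w₁ = -(w₁ * w) / (w₁ * w₁) by field_simp]
    exact div_nonneg (neg_nonneg.2 h) (mul_self_nonneg w₁)
  have hx₁ : x₁ = (-w₂ / w₁) • x₂ + (-w₃ / w₁) • x₃ + (-w₄ / w₁) • x₄ := by
    apply smul_right_injective E h₁
    simp only [smul_add, smul_smul, mul_div_cancel₀ _ h₁]
    linear_combination (norm := module) hrel
  have hmem := (convex_convexHull ℝ ({x₂, x₃, x₄} : Set E)).sum_mem (t := Finset.univ)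
    (w := ![-w₂ / w₁, -w₃ / w₁, -w₄ / w₁]) (z := ![x₂, x₃, x₄]) ?_ ?_ ?_
  · simpa [Fin.sum_univ_three, ← hx₁] using hmem
  · intro i _
    fin_cases i <;> simp [weight_nonneg h₂, weight_nonneg h₃, weight_nonneg h₄]
  · simp only [Fin.sum_univ_three, Matrix.cons_val_zero, Matrix.cons_val_one, Matrix.cons_val_two,
      Matrix.head_cons, Matrix.tail_cons]
    rw [← add_div, ← add_div, div_eq_one_iff_eq h₁]
    linarith
  · intro i _
    fin_cases i <;> exact subset_convexHull ℝ _ (by simp)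

theorem mul_pos_of_affine_relation {E : Type*} [AddCommGroup E] [Module ℝ E]
    {x₁ x₂ x₃ x₄ : E} {w₁ w₂ w₃ w₄ : ℝ}
    (hrel : w₁ • x₁ + w₂ • x₂ + w₃ • x₃ + w₄ • x₄ = 0) (hsum : w₁ + w₂ + w₃ + w₄ = 0)
    (h₃ : x₃ ∉ convexHull ℝ {x₁, x₂, x₄}) (h₄ : x₄ ∉ convexHull ℝ {x₁, x₂, x₃})
    (h₁₂ : 0 < w₁ * w₂) : 0 < w₃ * w₄ := by
  by_contra! h₃₄
  have hrel₃ : w₃ • x₃ + w₁ • x₁ + w₂ • x₂ + w₄ • x₄ = 0 := by rw [← hrel]; abel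
  have hrel₄ : w₄ • x₄ + w₁ • x₁ + w₂ • x₂ + w₃ • x₃ = 0 := by rw [← hrel]; abel
  rcases lt_or_gt_of_ne (left_ne_zero_of_mul h₁₂.ne') with hw₁ | hw₁
  · have hw₂ : w₂ < 0 := neg_of_mul_pos_right h₁₂ hw₁.le
    rcases lt_or_ge 0 w₃ with hw₃ | hw₃
    · exact h₃ (mem_convexHull_of_affine_relation hrel₃ (by linarith) hw₃.ne'
        (by nlinarith) (by nlinarith) h₃₄)
    · exact h₄ (mem_convexHull_of_affine_relation hrel₄ (by linarith) (by nlinarith)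
        (by nlinarith) (by nlinarith) (by nlinarith))
  · have hw₂ : 0 < w₂ := pos_of_mul_pos_right h₁₂ hw₁.le
    rcases lt_or_ge w₃ 0 with hw₃ | hw₃
    · exact h₃ (mem_convexHull_of_affine_relation hrel₃ (by linarith) hw₃.ne
        (by nlinarith) (by nlinarith) h₃₄)
    · exact h₄ (mem_convexHull_of_affine_relation hrel₄ (by linarith) (by nlinarith)
        (by nlinarith) (by nlinarith) (by nlinarith))

theorem det2_affine_relation (a b c d : ℝ × ℝ) :
    det2 (c - b) (d - b) • a + (-det2 (c - a) (d - a)) • b + det2 (b - a) (d - a) • c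
      + (-det2 (b - a) (c - a)) • d = 0 := by
  ext <;> simp only [det2, Prod.fst_add, Prod.snd_add, Prod.smul_fst, Prod.smul_snd, Prod.fst_sub,
    Prod.snd_sub, smul_eq_mul, Prod.fst_zero, Prod.snd_zero] <;> ring

theorem collinear_of_det2_eq_zero {a b c : ℝ × ℝ} (h : det2 (b - a) (c - a) = 0) :
    Collinear ℝ ({a, b, c} : Set (ℝ × ℝ)) := by
  rcases eq_or_ne a b with rfl | hab
  · simpa using collinear_pair ℝ a c
  set u := b - a
  set v := c - a
  have hu : u.1 ^ 2 + u.2 ^ 2 ≠ 0 := by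
    intro h0
    refine hab (eq_of_sub_eq_zero (Prod.ext ?_ ?_)).symm <;>
      simp only [Prod.fst_zero, Prod.snd_zero] <;> nlinarith
  have hc : c = AffineMap.lineMap a b ((v.1 * u.1 + v.2 * u.2) / (u.1 ^ 2 + u.2 ^ 2)) := by
    rw [AffineMap.lineMap_apply_module', ← sub_eq_iff_eq_add]
    change v = _
    simp only [det2] at h
    ext <;> simp only [Prod.smul_fst, Prod.smul_snd, smul_eq_mul] <;> field_simp
    · linear_combination -u.2 * h
    · linear_combination u.1 * h
  have hcab := hc ▸ AffineMap.lineMap_mem_affineSpan_pair _ a b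
  refine (collinear_insert_of_mem_affineSpan_pair hcab).subset fun x hx => ?_
  simp only [Set.mem_insert_iff, Set.mem_singleton_iff] at hx ⊢
  tauto

theorem Generic.det2_ne_zero {C : Finset (ℝ × ℝ)} (hC : Generic C) {a b c : ℝ × ℝ}
    (ha : a ∈ C) (hb : b ∈ C) (hc : c ∈ C) (hab : a ≠ b) (hac : a ≠ c) (hbc : b ≠ c) :
    det2 (b - a) (c - a) ≠ 0 :=
  fun h => hC a ha b hb c hc hab hac hbc (collinear_of_det2_eq_zero h)

theorem sepLine_comm_of_notMem_convexHull {A B P Q : ℝ × ℝ}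
    (hA : A ∉ convexHull ℝ {P, Q, B}) (hB : B ∉ convexHull ℝ {P, Q, A})
    (hP : P ∉ convexHull ℝ {A, B, Q}) (hQ : Q ∉ convexHull ℝ {A, B, P}) :
    SepLine A B P Q ↔ SepLine P Q A B := by
  set wA := det2 (P - B) (Q - B)
  set wB := -det2 (P - A) (Q - A)
  set wP := det2 (B - A) (Q - A)
  set wQ := -det2 (B - A) (P - A)
  have hrel : wA • A + wB • B + wP • P + wQ • Q = 0 := det2_affine_relation A B P Q
  have hsum : wA + wB + wP + wQ = 0 := by
    simp only [wA, wB, wP, wQ, det2, Prod.fst_sub, Prod.snd_sub]; ring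
  have hsepAB : SepLine A B P Q ↔ 0 < wP * wQ := by
    simp only [SepLine, wP, wQ, mul_neg, neg_pos, mul_comm]
  have hsepPQ : SepLine P Q A B ↔ 0 < wA * wB := by
    simp only [SepLine, wA, wB, det2, Prod.fst_sub, Prod.snd_sub]
    constructor <;> intro h <;> linarith
  rw [hsepAB, hsepPQ]
  constructor
  · exact mul_pos_of_affine_relation (by rw [← hrel]; abel) (by linarith) hA hB
  · exact mul_pos_of_affine_relation hrel hsum hP hQ

theorem card_pairs_mul_neg {α R : Type*} [DecidableEq α] [CommRing R] [LinearOrder R]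
    [IsStrictOrderedRing R] (D : Finset α) (f : α → R) :
    #{s ∈ D.powersetCard 2 | ∃ A ∈ s, ∃ B ∈ s, A ≠ B ∧ f A * f B < 0} =
      #{x ∈ D | 0 < f x} * #{x ∈ D | f x < 0} := by
  rw [← card_product]
  symm
  refine card_bij (fun p _ => {p.1, p.2}) ?_ ?_ ?_
  · rintro ⟨A, B⟩ hAB
    simp only [mem_product, mem_filter] at hAB
    obtain ⟨⟨hA, hfA⟩, hB, hfB⟩ := hAB
    have hne : A ≠ B := by rintro rfl; exact lt_asymm hfA hfB
    simp only [mem_filter, mem_powersetCard, insert_subset_iff,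
      singleton_subset_iff, card_pair hne]
    exact ⟨⟨⟨hA, hB⟩, trivial⟩, A, by simp, B, by simp, hne, mul_neg_of_pos_of_neg hfA hfB⟩
  · rintro ⟨A, B⟩ hAB ⟨A', B'⟩ hAB' heq
    simp only [mem_product, mem_filter] at hAB hAB'
    have hA' : A' ∈ ({A, B} : Finset α) := heq ▸ by simp
    have hB' : B' ∈ ({A, B} : Finset α) := heq ▸ by simp
    simp only [mem_insert, mem_singleton] at hA' hB'
    obtain ⟨⟨-, hfA⟩, -, hfB⟩ := hAB
    obtain ⟨⟨-, hfA'⟩, -, hfB'⟩ := hAB'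
    rcases hA' with rfl | rfl <;> rcases hB' with rfl | rfl
    all_goals first | rfl | (exfalso; linarith)
  · intro s hs
    simp only [mem_filter, mem_powersetCard] at hs
    obtain ⟨⟨hsD, hs2⟩, A, hA, B, hB, hne, hfAB⟩ := hs
    have hs : s = {A, B} := by
      refine (eq_of_subset_of_card_le ?_ ?_).symm
      · simp [insert_subset_iff, hA, hB]
      · rw [hs2, card_pair hne]
    have hAD : A ∈ D := hsD hA
    have hBD : B ∈ D := hsD hB
    subst hs
    rcases mul_neg_iff.1 hfAB with ⟨hfA, hfB⟩ | ⟨hfA, hfB⟩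
    · exact ⟨(A, B), by simp [hAD, hBD, hfA, hfB], rfl⟩
    · exact ⟨(B, A), by simp [hAD, hBD, hfA, hfB], pair_comm B A⟩

theorem even_card_pos_mul_card_neg {α R : Type*} [CommRing R] [LinearOrder R]
    [IsStrictOrderedRing R] {D : Finset α} {f : α → R} (hf : ∀ x ∈ D, f x ≠ 0)
    (hD : Odd #D) : Even (#{x ∈ D | 0 < f x} * #{x ∈ D | f x < 0}) := by
  have hsplit : #{x ∈ D | 0 < f x} + #{x ∈ D | f x < 0} = #D := by
    rw [← card_filter_add_card_filter_not (s := D) (fun x => 0 < f x)]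
    congr 2
    exact filter_congr fun x hx => ⟨lt_asymm, fun h => (not_lt.1 h).lt_of_ne (hf x hx)⟩
  rw [Nat.even_mul]
  by_contra! h
  simp only [Nat.not_even_iff_odd] at h
  exact Nat.not_even_iff_odd.2 hD (hsplit ▸ h.1.add_odd h.2)

theorem ConvexPos.notMem_convexHull_triple {C : Finset (ℝ × ℝ)} (hC : ConvexPos C)
    {x y z w : ℝ × ℝ} (hx : x ∈ C) (hy : y ∈ C) (hz : z ∈ C) (hw : w ∈ C)
    (hxy : x ≠ y) (hxz : x ≠ z) (hxw : x ≠ w) : x ∉ convexHull ℝ {y, z, w} :=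
  fun h => hC x hx <| convexHull_mono (by
    simp [Set.insert_subset_iff, hy, hz, hw, hxy.symm, hxz.symm, hxw.symm]) h

theorem ConvexPos.nsep_eq_card_mul_card {C : Finset (ℝ × ℝ)} (hC : ConvexPos C)
    {P Q : ℝ × ℝ} (hP : P ∈ C) (hQ : Q ∈ C) (hPQ : P ≠ Q) :
    nsep C P Q = #{X ∈ C \ {P, Q} | 0 < det2 (Q - P) (X - P)} *
      #{X ∈ C \ {P, Q} | det2 (Q - P) (X - P) < 0} := by
  rw [nsep, ← card_pairs_mul_neg]
  refine congrArg card (filter_congr fun s hs => ?_)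
  have hsD := (mem_powersetCard.1 hs).1
  refine exists_congr fun A => and_congr_right fun hA =>
    exists_congr fun B => and_congr_right fun hB => and_congr_right fun hAB => ?_
  obtain ⟨hAC, hAPQ⟩ := mem_sdiff.1 (hsD hA)
  obtain ⟨hBC, hBPQ⟩ := mem_sdiff.1 (hsD hB)
  simp only [mem_insert, mem_singleton, not_or] at hAPQ hBPQ
  exact sepLine_comm_of_notMem_convexHull
    (hC.notMem_convexHull_triple hAC hP hQ hBC hAPQ.1 hAPQ.2 hAB)
    (hC.notMem_convexHull_triple hBC hP hQ hAC hBPQ.1 hBPQ.2 hAB.symm)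
    (hC.notMem_convexHull_triple hP hAC hBC hQ (Ne.symm hAPQ.1) (Ne.symm hBPQ.1) hPQ)
    (hC.notMem_convexHull_triple hQ hAC hBC hP (Ne.symm hAPQ.2) (Ne.symm hBPQ.2) hPQ.symm)

/-- The vertices of a convex polygon with an odd number `2n+1` of vertices form
a monochromatic configuration. -/
theorem odd_convex_polygon_mono (C : Finset (ℝ × ℝ)) (hC : Generic C)
    (hconv : ConvexPos C) (n : ℕ) (hcard : C.card = 2 * n + 1) :
    Mono C := by
  intro P hP Q hQ hPQ
  have hPQC : {P, Q} ⊆ C := insert_subset_iff.2 ⟨hP, singleton_subset_iff.2 hQ⟩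
  have hcardD : #(C \ {P, Q}) + 2 = 2 * n + 1 := by
    rw [← hcard, ← card_pair hPQ, card_sdiff_add_card_eq_card hPQC]
  have hoffLine : ∀ X ∈ C \ {P, Q}, det2 (Q - P) (X - P) ≠ 0 := by
    intro X hX
    simp only [mem_sdiff, mem_insert, mem_singleton, not_or] at hX
    exact hC.det2_ne_zero hP hQ hX.1 hPQ (Ne.symm hX.2.1) (Ne.symm hX.2.2)
  obtain ⟨m, hm⟩ := even_card_pos_mul_card_neg hoffLine ⟨n - 1, by omega⟩
  rw [Orchard, hconv.nsep_eq_card_mul_card hP hQ hPQ, hm, hcard, Int.ModEq]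
  push_cast
  omega
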